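/- For a Kneser graph K_{n+1:k} with n+1 ≥ 2k+1, the determining number equals n+1−k if and only if k = 1, or (n+1, k) = (5, 2), or (n+1, k) = (6, 2). -/

import Mathlib

/-- A set `S` of vertices is a determining set of `G` if any two automorphisms
agreeing on `S` are equal. -/
def IsDeterminingSet {V : Type*} (G : SimpleGraph V) (S : Set V) : Prop :=
  ∀ g h : G ≃g G, (∀ v ∈ S, g v = h v) → g = h

/-- The determining number of a graph: the minimum cardinality of a determining set. -/
noncomputable def detNumber {V : Type*} (G : SimpleGraph V) : ℕ :=
  sInf {m | ∃ S : Finset V, S.card = m ∧ IsDeterminingSet G (S : Set V)}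

/-- The Kneser graph `K_{n:k}`: vertices are the `k`-subsets of `[n]`,
edges join disjoint sets. -/
def kneserGraph (n k : ℕ) : SimpleGraph {s : Finset (Fin n) // s.card = k} where
  Adj a b := Disjoint (a : Finset (Fin n)) (b : Finset (Fin n)) ∧ a ≠ b
  symm := ⟨fun a b h => ⟨h.1.symm, h.2.symm⟩⟩
  loopless := ⟨fun a h => h.2 rfl⟩

/-!
For `m ≥ 2k + 1` every automorphism of `K(m, k)` is induced by a permutation of the points.
It preserves the number `C(m - |A ∪ B|, k)` of common neighbours of two vertices, hence the
pairs with `|A ∪ B| = k + 1`: it is an automorphism of the Johnson graph `J(m, k)`. The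
`(k - 1)`-sets `D` correspond to the stars `{A | D ⊆ A}`, the only maximal cliques of
`J(m, k)` with more than `k + 1` vertices, so an automorphism of `J(m, k)` induces one of
`J(m, k - 1)`, and induction on `k` produces the permutation. Consequently a set `S` of
vertices is determining exactly when the `k`-sets in `S` separate the points.

Distinct points lie in distinct subfamilies of `S`, at most one of them empty and at most `|S|` of
them singletons, so counting incidences gives `2(m - 1) ≤ (k + 1)|S|`; for `k = 1` and
`(m, k) = (5, 2), (6, 2)` this forces `|S| ≥ m - k`, which the intervals `[i, i + k)` attain.
In every other case `m - k - 1` sets suffice, each made of one point `j` and all but one of `k`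
further points, the omitted one depending on `j`.
-/

open Finset

section FinsetLemmas

variable {α : Type*} [DecidableEq α]

lemma card_inter_lt_of_ne {r : ℕ} {A B : Finset α} (hA : #A = r) (hB : #B = r) (h : A ≠ B) :
    #(A ∩ B) < r := by
  by_contra! hr
  have hAB : A ⊆ B := inter_eq_left.1 (eq_of_subset_of_card_le inter_subset_left (by omega))
  exact h (eq_of_subset_of_card_le hAB (by omega))

lemma subset_union_of_not_inter_subset {r : ℕ} {A B C : Finset α} (hC : #C = r + 1)
    (hAB : #(A ∩ B) ≤ r) (hCA : r ≤ #(C ∩ A)) (hCB : r ≤ #(C ∩ B)) (h : ¬ A ∩ B ⊆ C) :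
    C ⊆ A ∪ B := by
  have hlt : #(C ∩ (A ∩ B)) < #(A ∩ B) :=
    card_lt_card ⟨inter_subset_right, fun h' => h (h'.trans inter_subset_left)⟩
  have hsum : #(C ∩ A) + #(C ∩ B) = #(C ∩ (A ∪ B)) + #(C ∩ (A ∩ B)) := by
    rw [← card_union_add_card_inter, ← inter_union_distrib_left, ← inter_inter_distrib_left]
  exact inter_eq_left.1 (eq_of_subset_of_card_le inter_subset_left (by omega))

/-- A family of `(r + 1)`-sets pairwise meeting in `r` points either has a common `r`-subset or
consists of `(r + 1)`-subsets of one `(r + 2)`-set, of which there are only `r + 2`. -/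
lemma exists_common_subset_of_le_card_inter {r : ℕ} {K : Finset (Finset α)}
    (hcard : ∀ A ∈ K, #A = r + 1) (hK : ∀ A ∈ K, ∀ B ∈ K, r ≤ #(A ∩ B)) (hsize : r + 3 ≤ #K) :
    ∃ Z : Finset α, #Z = r ∧ ∀ A ∈ K, Z ⊆ A := by
  obtain ⟨A, hA, B, hB, hAB⟩ := one_lt_card.1 (by omega : 1 < #K)
  have hZ : #(A ∩ B) = r := le_antisymm
    (Nat.lt_succ_iff.1 (card_inter_lt_of_ne (hcard A hA) (hcard B hB) hAB)) (hK A hA B hB)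
  have hU : #(A ∪ B) = r + 2 := by
    have := card_union_add_card_inter A B
    rw [hcard A hA, hcard B hB] at this
    omega
  have hsub : ∀ C ∈ K, ¬ A ∩ B ⊆ C → C ⊆ A ∪ B := fun C hC =>
    subset_union_of_not_inter_subset (hcard C hC) hZ.le (hK C hC A hA) (hK C hC B hB)
  obtain ⟨C₀, hC₀, hC₀U⟩ : ∃ C₀ ∈ K, ¬ C₀ ⊆ A ∪ B := by
    by_contra! h
    have := card_le_card fun C hC => mem_powersetCard.2 ⟨h C hC, hcard C hC⟩
    rw [card_powersetCard, hU, Nat.choose_succ_self_right] at this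
    omega
  have hZC₀ : A ∩ B ⊆ C₀ := by_contra fun h => hC₀U (hsub C₀ hC₀ h)
  have hC₀Z : C₀ ∩ (A ∪ B) = A ∩ B := by
    refine (eq_of_subset_of_card_le (subset_inter hZC₀ inter_subset_union) ?_).symm
    have := card_lt_card (⟨inter_subset_left, fun h => hC₀U (h.trans inter_subset_right)⟩ :
      C₀ ∩ (A ∪ B) ⊂ C₀)
    rw [hcard C₀ hC₀] at this
    omega
  refine ⟨A ∩ B, hZ, fun C hC => by_contra fun hZC => ?_⟩
  have hC₀C : C₀ ∩ C ⊆ C ∩ (A ∩ B) := fun y hy => by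
    have hyC := (mem_inter.1 hy).2
    have : y ∈ C₀ ∩ (A ∪ B) := mem_inter.2 ⟨(mem_inter.1 hy).1, hsub C hC hZC hyC⟩
    exact mem_inter.2 ⟨hyC, hC₀Z ▸ this⟩
  have := card_lt_card (⟨inter_subset_right, fun h => hZC (h.trans inter_subset_left)⟩ :
    C ∩ (A ∩ B) ⊂ A ∩ B)
  have := card_le_card hC₀C
  have := hK C₀ hC₀ C hC
  omega

end FinsetLemmas

def johnsonGraph (α : Type*) [DecidableEq α] (r : ℕ) : SimpleGraph {s : Finset α // #s = r} where
  Adj A B := #(A.1 ∪ B.1) = r + 1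
  symm := ⟨fun A B h => by rwa [union_comm]⟩
  loopless := ⟨fun A h => by simp [A.2] at h⟩

@[simp]
lemma johnsonGraph_adj {α : Type*} [DecidableEq α] {r : ℕ} {A B : {s : Finset α // #s = r}} :
    (johnsonGraph α r).Adj A B ↔ #(A.1 ∪ B.1) = r + 1 := Iff.rfl

section Johnson

variable {α : Type*} [DecidableEq α]

lemma le_card_inter_iff_eq_or_adj {r : ℕ} (A B : {s : Finset α // #s = r + 1}) :
    r ≤ #(A.1 ∩ B.1) ↔ A = B ∨ (johnsonGraph α (r + 1)).Adj A B := by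
  have := card_union_add_card_inter A.1 B.1
  rw [A.2, B.2] at this
  rw [johnsonGraph_adj]
  rcases eq_or_ne A B with rfl | hAB
  · simp [A.2]
  · have := card_inter_lt_of_ne A.2 B.2 (Subtype.val_injective.ne hAB)
    simp only [hAB, false_or]
    omega

section Core

variable [Fintype α] {t : ℕ}

lemma card_compl_le_card_supersets {D : Finset α} (hD : #D = t) :
    #Dᶜ ≤ #{A : {s : Finset α // #s = t + 1} | D ⊆ A.1} := by
  rw [← card_attach]
  refine card_le_card_of_injOn
    (fun x => ⟨insert x.1 D, by rw [card_insert_of_notMem (mem_compl.1 x.2), hD]⟩)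
    (fun x _ => by simp [subset_insert]) fun x _ y _ hxy => Subtype.ext ?_
  have hxy' : insert x.1 D = insert y.1 D := congrArg Subtype.val hxy
  have hx : x.1 ∈ insert y.1 D := hxy' ▸ mem_insert_self _ _
  exact (mem_insert.1 hx).resolve_right (mem_compl.1 x.2)

lemma subset_of_forall_superset (ht : t + 2 ≤ Fintype.card α) {D W : Finset α} (hD : #D = t)
    (h : ∀ A : {s : Finset α // #s = t + 1}, D ⊆ A.1 → W ⊆ A.1) : W ⊆ D := by
  intro x hxW
  by_contra hxD
  obtain ⟨y, hy⟩ : (insert x D)ᶜ.Nonempty := by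
    rw [← card_pos, card_compl, card_insert_of_notMem hxD, hD]
    omega
  rw [mem_compl, mem_insert, not_or] at hy
  have := h ⟨insert y D, by rw [card_insert_of_notMem hy.2, hD]⟩ (subset_insert _ _) hxW
  exact (mem_insert.1 this).elim (fun h => hy.1 h.symm) hxD

variable (hα : 2 * t + 3 ≤ Fintype.card α)
  (g : johnsonGraph α (t + 1) ≃g johnsonGraph α (t + 1))
include hα

/-- The `(t + 1)`-sets through a `t`-set `D` form a clique too large to be anything but a
sunflower, and so does its image under `g`; its kernel is the core of `D`. -/
lemma exists_core (D : {s : Finset α // #s = t}) :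
    ∃ Z : Finset α, #Z = t ∧ ∀ A : {s : Finset α // #s = t + 1}, D.1 ⊆ A.1 → Z ⊆ (g A).1 := by
  set T : Finset {s : Finset α // #s = t + 1} := {A | D.1 ⊆ A.1}
  have hinj : Function.Injective fun A => (g A).1 := Subtype.val_injective.comp g.injective
  have hK : ∀ A ∈ T, ∀ B ∈ T, t ≤ #((g A).1 ∩ (g B).1) := by
    simp only [T, mem_filter, mem_univ, true_and]
    intro A hA B hB
    have : t ≤ #(A.1 ∩ B.1) := by simpa [D.2] using card_le_card (subset_inter hA hB)
    rw [le_card_inter_iff_eq_or_adj] at this ⊢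
    exact this.imp (congrArg g) g.map_adj_iff.2
  have hsize : t + 3 ≤ #T := by
    have : #D.1ᶜ ≤ #T := card_compl_le_card_supersets D.2
    rw [card_compl, D.2] at this
    omega
  obtain ⟨Z, hZ, hZK⟩ := exists_common_subset_of_le_card_inter (K := T.image fun A => (g A).1)
    (fun _ hA => by obtain ⟨A, -, rfl⟩ := mem_image.1 hA; exact (g A).2)
    (by simpa only [forall_mem_image] using hK) (by rwa [card_image_of_injective _ hinj])
  exact ⟨Z, hZ, fun A hA => hZK _ (mem_image_of_mem _ (mem_filter.2 ⟨mem_univ _, hA⟩))⟩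

noncomputable def core (D : {s : Finset α // #s = t}) : {s : Finset α // #s = t} :=
  ⟨(exists_core hα g D).choose, (exists_core hα g D).choose_spec.1⟩

lemma core_subset {D : {s : Finset α // #s = t}} {A : {s : Finset α // #s = t + 1}}
    (hDA : D.1 ⊆ A.1) : (core hα g D).1 ⊆ (g A).1 :=
  (exists_core hα g D).choose_spec.2 A hDA

lemma core_symm_core (D : {s : Finset α // #s = t}) : core hα g.symm (core hα g D) = D := by
  refine Subtype.ext (eq_of_subset_of_card_le ?_ (by rw [D.2, (core hα g.symm _).2]))
  refine subset_of_forall_superset (by omega) D.2 fun A hDA => ?_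
  simpa using core_subset hα g.symm (core_subset hα g hDA)

lemma core_adj {D E : {s : Finset α // #s = t}} (h : (johnsonGraph α t).Adj D E) :
    (johnsonGraph α t).Adj (core hα g D) (core hα g E) := by
  have hne : core hα g D ≠ core hα g E := fun hDE => (johnsonGraph α t).ne_of_adj h <| by
    rw [← core_symm_core hα g D, hDE, core_symm_core]
  have hlt := card_inter_lt_of_ne (core hα g D).2 (core hα g E).2 (Subtype.val_injective.ne hne)
  have hle := card_le_card (union_subset (core_subset hα g (A := ⟨_, h⟩) subset_union_left)
    (core_subset hα g (A := ⟨_, h⟩) subset_union_right))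
  have := card_union_add_card_inter (core hα g D).1 (core hα g E).1
  rw [(core hα g D).2, (core hα g E).2] at this
  rw [(g _).2] at hle
  rw [johnsonGraph_adj]
  omega

noncomputable def coreIso : johnsonGraph α t ≃g johnsonGraph α t where
  toFun := core hα g
  invFun := core hα g.symm
  left_inv := core_symm_core hα g
  right_inv D := by simpa using core_symm_core hα g.symm D
  map_rel_iff' {D E} := ⟨fun h => by
    simpa [core_symm_core] using (core_adj hα g.symm h :
      (johnsonGraph α t).Adj (core hα g.symm (core hα g D)) (core hα g.symm (core hα g E))),
    core_adj hα g⟩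

end Core

lemma exists_perm_image_eq_of_card_eq_one
    (e : {s : Finset α // #s = 1} ≃ {s : Finset α // #s = 1}) :
    ∃ σ : Equiv.Perm α, ∀ A, (e A).1 = A.1.image σ := by
  let single : α ≃ {s : Finset α // #s = 1} :=
    Equiv.ofBijective (fun a => ⟨{a}, card_singleton a⟩)
      ⟨fun a b h => singleton_injective (congrArg Subtype.val h),
        fun A => (card_eq_one.1 A.2).imp fun a ha => Subtype.ext ha.symm⟩
  refine ⟨single.trans (e.trans single.symm), fun A => ?_⟩
  obtain ⟨a, rfl⟩ := single.surjective A
  calc (e (single a)).1 = (single (single.symm (e (single a)))).1 := by rw [single.apply_symm_apply]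
    _ = (single a).1.image (single.trans (e.trans single.symm)) := (image_singleton _ _).symm

lemma image_eq_of_core_eq [Fintype α] {t : ℕ} (ht : 1 ≤ t) (hα : 2 * t + 3 ≤ Fintype.card α)
    (g : johnsonGraph α (t + 1) ≃g johnsonGraph α (t + 1)) (σ : Equiv.Perm α)
    (hσ : ∀ D, (coreIso hα g D).1 = D.1.image σ) (A : {s : Finset α // #s = t + 1}) :
    (g A).1 = A.1.image σ := by
  refine (eq_of_subset_of_card_le (fun z hz => ?_) ?_).symm
  · obtain ⟨x, hxA, rfl⟩ := mem_image.1 hz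
    obtain ⟨y, hyA, hyx⟩ := exists_mem_ne (by rw [A.2]; omega) x
    let D : {s : Finset α // #s = t} := ⟨A.1.erase y, by rw [card_erase_of_mem hyA, A.2]; rfl⟩
    have : σ x ∈ (coreIso hα g D).1 := hσ D ▸ mem_image_of_mem σ (mem_erase.2 ⟨hyx.symm, hxA⟩)
    exact core_subset hα g (erase_subset y A.1) this
  · rw [card_image_of_injective _ σ.injective, A.2, (g A).2]

theorem johnsonGraph_exists_perm [Fintype α] {r : ℕ} (hr : 1 ≤ r)
    (hα : 2 * r + 1 ≤ Fintype.card α) (g : johnsonGraph α r ≃g johnsonGraph α r) :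
    ∃ σ : Equiv.Perm α, ∀ A, (g A).1 = A.1.image σ := by
  induction r, hr using Nat.le_induction with
  | base => exact exists_perm_image_eq_of_card_eq_one g.toEquiv
  | succ t ht ih =>
    obtain ⟨σ, hσ⟩ := ih (by omega) (coreIso (by omega) g)
    exact ⟨σ, image_eq_of_core_eq ht (by omega) g σ hσ⟩

end Johnson

lemma SimpleGraph.Iso.ncard_commonNeighbors {V W : Type*} {G : SimpleGraph V} {G' : SimpleGraph W}
    (g : G ≃g G') (v w : V) :
    (G'.commonNeighbors (g v) (g w)).ncard = (G.commonNeighbors v w).ncard := by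
  have : G.commonNeighbors v w = g ⁻¹' G'.commonNeighbors (g v) (g w) := by
    ext u
    simp [SimpleGraph.mem_commonNeighbors, g.map_adj_iff]
  rw [this, Set.ncard_preimage_of_injective_subset_range g.injective
    (by simp [g.surjective.range_eq])]

lemma Nat.choose_lt_choose_succ {n k : ℕ} (hk : 1 ≤ k) (hkn : k ≤ n + 1) :
    n.choose k < (n + 1).choose k := by
  obtain ⟨j, rfl⟩ := Nat.exists_eq_add_of_le' hk
  rw [Nat.choose_succ_succ']
  have := Nat.choose_pos (by omega : j ≤ n)
  omega

section Kneser

variable {m k : ℕ}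

lemma kneserGraph_adj {A B : {s : Finset (Fin m) // #s = k}} :
    (kneserGraph m k).Adj A B ↔ Disjoint A.1 B.1 ∧ A ≠ B := Iff.rfl

lemma ncard_commonNeighbors_kneserGraph (hk : 1 ≤ k) (A B : {s : Finset (Fin m) // #s = k}) :
    ((kneserGraph m k).commonNeighbors A B).ncard = (m - #(A.1 ∪ B.1)).choose k := by
  have hne : ∀ C D : {s : Finset (Fin m) // #s = k}, Disjoint C.1 D.1 → C ≠ D := by
    rintro C _ h rfl
    have := C.2
    rw [(disjoint_self_iff_empty _).1 h, card_empty] at this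
    omega
  have : (kneserGraph m k).commonNeighbors A B =
      Subtype.val ⁻¹' ↑((A.1 ∪ B.1)ᶜ.powersetCard k) := by
    ext C
    simp only [SimpleGraph.mem_commonNeighbors, kneserGraph_adj, Set.mem_preimage, mem_coe,
      mem_powersetCard, C.2, and_true, subset_compl_iff_disjoint_left, disjoint_union_left]
    exact ⟨fun h => ⟨h.1.1, h.2.1⟩, fun h => ⟨⟨h.1, hne _ _ h.1⟩, h.2, hne _ _ h.2⟩⟩
  rw [this, Set.ncard_preimage_of_injective_subset_range Subtype.val_injective
    (fun s hs => ⟨⟨s, (mem_powersetCard.1 hs).2⟩, rfl⟩), Set.ncard_coe_finset, card_powersetCard,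
    card_compl, Fintype.card_fin]

lemma johnsonGraph_adj_iff_ncard_commonNeighbors (hk : 1 ≤ k) (hm : 2 * k + 1 ≤ m)
    {A B : {s : Finset (Fin m) // #s = k}} (hAB : A ≠ B) :
    (johnsonGraph (Fin m) k).Adj A B ↔
      ((kneserGraph m k).commonNeighbors A B).ncard = (m - k - 1).choose k := by
  have := card_union_add_card_inter A.1 B.1
  have := card_inter_lt_of_ne A.2 B.2 (Subtype.val_injective.ne hAB)
  have := card_le_univ (A.1 ∪ B.1)
  rw [ncard_commonNeighbors_kneserGraph hk, A.2, B.2, Fintype.card_fin] at *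
  rw [johnsonGraph_adj]
  refine ⟨fun h => by rw [h, Nat.sub_sub], fun h => by_contra fun hne => ?_⟩
  have := Nat.choose_le_choose k (by omega : m - #(A.1 ∪ B.1) ≤ m - k - 2)
  have := Nat.choose_lt_choose_succ hk (by omega : k ≤ m - k - 2 + 1)
  rw [show m - k - 2 + 1 = m - k - 1 by omega] at this
  omega

def SimpleGraph.Iso.toJohnsonGraph (hk : 1 ≤ k) (hm : 2 * k + 1 ≤ m)
    (g : kneserGraph m k ≃g kneserGraph m k) :
    johnsonGraph (Fin m) k ≃g johnsonGraph (Fin m) k where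
  toEquiv := g.toEquiv
  map_rel_iff' {A B} := by
    rcases eq_or_ne A B with rfl | hAB
    · simp
    change (johnsonGraph (Fin m) k).Adj (g A) (g B) ↔ _
    rw [johnsonGraph_adj_iff_ncard_commonNeighbors hk hm hAB,
      johnsonGraph_adj_iff_ncard_commonNeighbors hk hm (g.injective.ne hAB),
      g.ncard_commonNeighbors]

lemma kneserGraph_exists_perm (hk : 1 ≤ k) (hm : 2 * k + 1 ≤ m)
    (g : kneserGraph m k ≃g kneserGraph m k) :
    ∃ σ : Equiv.Perm (Fin m), ∀ A, (g A).1 = A.1.image σ :=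
  johnsonGraph_exists_perm hk (by rwa [Fintype.card_fin]) (g.toJohnsonGraph hk hm)

def Equiv.Perm.toKneserGraphIso (σ : Equiv.Perm (Fin m)) : kneserGraph m k ≃g kneserGraph m k where
  toEquiv := σ.finsetCongr.subtypeEquiv fun s => by simp
  map_rel_iff' {A B} := by
    simp [kneserGraph_adj, Subtype.ext_iff]

@[simp]
lemma Equiv.Perm.coe_toKneserGraphIso_apply (σ : Equiv.Perm (Fin m))
    (A : {s : Finset (Fin m) // #s = k}) : (σ.toKneserGraphIso A).1 = A.1.image σ := by
  simp [Equiv.Perm.toKneserGraphIso, map_eq_image]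

end Kneser

/-- Among distinct subsets of `S` at most one is empty and at most `#S` are singletons. -/
lemma two_mul_card_le_sum_card_add {ι : Type*} [DecidableEq ι] {S : Finset ι}
    {P : Finset (Finset ι)} (hP : ∀ T ∈ P, T ⊆ S) : 2 * #P ≤ ∑ T ∈ P, #T + #S + 2 := by
  have hsplit := sum_filter_add_sum_filter_not P (fun T => #T ≤ 1) fun T => #T
  have hcard := card_filter_add_card_filter_not (s := P) fun T => #T ≤ 1
  set P₁ := {T ∈ P | #T ≤ 1}
  have hbig : 2 * #{T ∈ P | ¬ #T ≤ 1} ≤ ∑ T ∈ P with ¬ #T ≤ 1, #T := by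
    rw [mul_comm, ← smul_eq_mul]
    exact card_nsmul_le_sum _ _ _ fun T hT => by have := (mem_filter.1 hT).2; omega
  have hsmall : #P₁ ≤ ∑ T ∈ P₁, #T + 1 := by
    calc #P₁ ≤ #(P₁.erase ∅) + 1 := by have := pred_card_le_card_erase (s := P₁) (a := ∅); omega
      _ ≤ ∑ T ∈ P₁.erase ∅, #T + 1 := by
          gcongr
          simpa using card_nsmul_le_sum (P₁.erase ∅) card 1 fun T hT =>
            card_pos.2 (nonempty_iff_ne_empty.2 (ne_of_mem_erase hT))
      _ ≤ ∑ T ∈ P₁, #T + 1 := by gcongr; exact erase_subset _ _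
  have hP₁ : #P₁ ≤ #S + 1 := by
    calc #P₁ ≤ #(insert ∅ (S.powersetCard 1)) := card_le_card fun T hT => by
          obtain ⟨hTP, hT⟩ := mem_filter.1 hT
          rcases Nat.le_one_iff_eq_zero_or_eq_one.1 hT with h | h
          · simp [card_eq_zero.1 h]
          · exact mem_insert_of_mem (mem_powersetCard.2 ⟨hP T hTP, h⟩)
      _ ≤ #S + 1 := (card_insert_le _ _).trans (by simp)
  omega

lemma image_swap_eq_self {α : Type*} [DecidableEq α] {s : Finset α} {a b : α}
    (h : a ∈ s ↔ b ∈ s) : s.image (Equiv.swap a b) = s :=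
  eq_of_subset_of_card_le (image_subset_iff.2 fun x hx => by
    rw [Equiv.swap_apply_def]; split_ifs <;> simp_all)
    (card_image_of_injective _ (Equiv.swap a b).injective).ge

section Separation

variable {α : Type*} [DecidableEq α] {k : ℕ}

def SeparatesPoints (S : Finset {s : Finset α // #s = k}) : Prop :=
  ∀ a b : α, (∀ A ∈ S, a ∈ A.1 ↔ b ∈ A.1) → a = b

lemma SeparatesPoints.two_mul_card_sub_one_le [Fintype α] {S : Finset {s : Finset α // #s = k}}
    (hS : SeparatesPoints S) : 2 * (Fintype.card α - 1) ≤ (k + 1) * #S := by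
  set incidence : α → Finset {s : Finset α // #s = k} := fun x => {A ∈ S | x ∈ A.1}
  have hinj : Function.Injective incidence := fun a b hab => hS a b fun A hA => by
    simpa [incidence, hA] using congrArg (A ∈ ·) hab
  have hsum : ∑ T ∈ univ.image incidence, #T = k * #S := by
    rw [sum_image fun a _ b _ hab => hinj hab, mul_comm, ← smul_eq_mul, ← sum_const]
    convert sum_card_bipartiteAbove_eq_sum_card_bipartiteBelow (s := univ) (t := S)
      (r := fun x A => x ∈ A.1) using 2
    · rfl
    · rename_i A _
      simp [bipartiteBelow, A.2]
  have := two_mul_card_le_sum_card_add (S := S) (P := univ.image incidence)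
    (by simp [incidence, filter_subset])
  rw [card_image_of_injective _ hinj, card_univ, hsum] at this
  rw [add_one_mul]
  omega

end Separation

section DeterminingSets

variable {V : Type*}

lemma detNumber_le {G : SimpleGraph V} {S : Finset V} (hS : IsDeterminingSet G S) : detNumber G ≤ #S :=
  Nat.sInf_le ⟨S, rfl, hS⟩

lemma exists_isDeterminingSet_card_eq_detNumber [Fintype V] (G : SimpleGraph V) :
    ∃ S : Finset V, #S = detNumber G ∧ IsDeterminingSet G S :=
  Nat.sInf_mem (s := {b | ∃ S : Finset V, #S = b ∧ IsDeterminingSet G S})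
    ⟨_, univ, rfl, fun _ _ hgh => RelIso.ext fun v => hgh v (mem_coe.2 (mem_univ v))⟩

variable {m k : ℕ}

lemma isDeterminingSet_kneserGraph_iff (hk : 1 ≤ k) (hm : 2 * k + 1 ≤ m)
    (S : Finset {s : Finset (Fin m) // #s = k}) :
    IsDeterminingSet (kneserGraph m k) S ↔ SeparatesPoints S := by
  constructor
  · intro hdet a b hab
    by_contra hne
    have hswap := hdet (Equiv.swap a b).toKneserGraphIso (RelIso.refl _) fun A hA =>
      Subtype.ext (by simpa using image_swap_eq_self (hab A hA))
    obtain ⟨X, haX, hXb, hX⟩ := exists_subsuperset_card_eq (singleton_subset_iff.2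
      (mem_erase.2 ⟨hne, mem_univ a⟩)) (by simpa using hk) (by simp; omega)
    have hXfix : X.image (Equiv.swap a b) = X := by
      simpa using congrArg Subtype.val (congrArg (· ⟨X, hX⟩) hswap)
    have hbX : b ∈ X := by
      simpa [hXfix] using mem_image_of_mem (Equiv.swap a b) (singleton_subset_iff.1 haX)
    exact (mem_erase.1 (hXb hbX)).1 rfl
  · intro hS g h hgh
    obtain ⟨σ, hσ⟩ := kneserGraph_exists_perm hk hm (g.trans h.symm)
    have hfix : ∀ A ∈ S, A.1.image σ = A.1 := fun A hA => by
      rw [← hσ]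
      simp [hgh A hA]
    have hσ₁ : ⇑σ = id := funext fun a => hS _ _ fun A hA => by
      have := σ.injective.mem_finset_image (s := A.1) (a := a)
      rwa [hfix A hA] at this
    refine RelIso.ext fun v => (h.symm_apply_eq).1 (Subtype.ext ?_)
    simpa [hσ₁] using hσ v

end DeterminingSets

section Windows

variable {m k : ℕ}

def windows (m k : ℕ) : Finset {s : Finset (Fin m) // #s = k} :=
  univ.image fun i : Fin (m - k) =>
    ⟨Ico ⟨i, by omega⟩ ⟨i + k, by omega⟩, by simp [Fin.card_Ico]⟩

lemma separatesPoints_windows (hk : 1 ≤ k) (hm : 2 * k ≤ m) : SeparatesPoints (windows m k) := by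
  intro a b hab
  wlog hlt : a < b generalizing a b
  · rcases (not_lt.1 hlt).eq_or_lt with h | h
    · exact h.symm
    · exact (this b a (fun A hA => (hab A hA).symm) h).symm
  obtain ⟨x, hx⟩ := a
  obtain ⟨y, hy⟩ := b
  have key : ∀ i < m - k, (i ≤ x ∧ x < i + k ↔ i ≤ y ∧ y < i + k) := fun i hi => by
    simpa [windows, Fin.le_def, Fin.lt_def] using hab _ (mem_image_of_mem _ (mem_univ ⟨i, hi⟩))
  rw [Fin.mk_lt_mk] at hlt
  exfalso
  by_cases h₁ : k ≤ x + 1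
  · have := key (x + 1 - k) (by omega)
    omega
  by_cases h₂ : y ≤ x + k
  · have := key (x + 1) (by omega)
    omega
  · have := key x (by omega)
    omega

end Windows

section Spikes

variable {s k : ℕ}

/-- Split `Fin (s + k + 1)` into the point `0`, the `s` points `1, …, s` and the `k` points
`s + 1, …, s + k`. The `j`-th set consists of the point `j + 1` and all the last `k` points
except `s + 1 + part j`. -/
def spikes (part : Fin s → Fin k) : Finset {A : Finset (Fin (s + k + 1)) // #A = k} :=
  univ.image fun j : Fin s =>
    ⟨insert ⟨j + 1, by omega⟩ ((Ioi ⟨s, by omega⟩).erase ⟨s + 1 + part j, by omega⟩), by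
      rw [card_insert_of_notMem (by simp [Fin.lt_def]),
        card_erase_of_mem (by simp [Fin.lt_def]; omega), Fin.card_Ioi]
      have := (part j).pos
      dsimp only
      omega⟩

lemma separatesPoints_spikes {part : Fin s → Fin k} (hsurj : Function.Surjective part)
    (htwo : ∀ i, ∃ j₁ j₂, j₁ ≠ j₂ ∧ part j₁ ≠ i ∧ part j₂ ≠ i) :
    SeparatesPoints (spikes part) := by
  intro a b hab
  wlog hlt : a < b generalizing a b
  · rcases (not_lt.1 hlt).eq_or_lt with h | h
    · exact h.symm
    · exact (this b a (fun A hA => (hab A hA).symm) h).symm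
  obtain ⟨x, hx⟩ := a
  obtain ⟨y, hy⟩ := b
  have key : ∀ j : Fin s,
      (x = j + 1 ∨ x ≠ s + 1 + part j ∧ s < x ↔ y = j + 1 ∨ y ≠ s + 1 + part j ∧ s < y) :=
    fun j => by
      simpa [spikes, Fin.ext_iff, Fin.lt_def] using hab _ (mem_image_of_mem _ (mem_univ j))
  rw [Fin.mk_lt_mk] at hlt
  exfalso
  by_cases hys : y ≤ s
  · have := key ⟨y - 1, by omega⟩
    simp only at this
    omega
  by_cases hxs : s < x
  · obtain ⟨j, hj⟩ := hsurj ⟨x - s - 1, by omega⟩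
    have := key j
    have := congrArg Fin.val hj
    simp only at this
    omega
  · obtain ⟨j₁, j₂, hj, hj₁, hj₂⟩ := htwo ⟨y - s - 1, by omega⟩
    have := key j₁
    have := key j₂
    have := Fin.val_injective.ne hj
    have := Fin.val_injective.ne hj₁
    have := Fin.val_injective.ne hj₂
    simp only at *
    omega

lemma exists_surjective_missing_each_twice (hk : 2 ≤ k) (hs : k ≤ s) (h2 : k = 2 → 4 ≤ s) :
    ∃ part : Fin s → Fin k, Function.Surjective part ∧
      ∀ i, ∃ j₁ j₂, j₁ ≠ j₂ ∧ part j₁ ≠ i ∧ part j₂ ≠ i := by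
  rcases hk.eq_or_lt with rfl | hk
  · have := h2 rfl
    refine ⟨fun j => if j.1 < 2 then 0 else 1, fun i => ?_, fun i => ?_⟩ <;> fin_cases i
    · exact ⟨⟨0, by omega⟩, by simp⟩
    · exact ⟨⟨2, by omega⟩, by simp⟩
    · exact ⟨⟨2, by omega⟩, ⟨3, by omega⟩, by simp, by simp, by simp⟩
    · exact ⟨⟨0, by omega⟩, ⟨1, by omega⟩, by simp, by simp, by simp⟩
  · refine ⟨fun j => ⟨min j (k - 1), by omega⟩, fun i => ⟨⟨i, by omega⟩, ?_⟩, fun i => ?_⟩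
    · ext
      simp only
      omega
    -- `part` takes the values `0`, `1` and `k - 1` at `0`, `1` and `s - 1`
    obtain ⟨j₁, j₂, h⟩ : ∃ j₁ j₂ : ℕ, j₁ < s ∧ j₂ < s ∧ j₁ ≠ j₂ ∧ min j₁ (k - 1) ≠ i ∧
        min j₂ (k - 1) ≠ i := by
      rcases (by omega : i.1 = 0 ∨ i.1 = 1 ∨ 2 ≤ i.1) with h | h | h
      · exact ⟨1, s - 1, by omega⟩
      · exact ⟨0, s - 1, by omega⟩
      · exact ⟨0, 1, by omega⟩
    exact ⟨⟨j₁, h.1⟩, ⟨j₂, h.2.1⟩, by simp [h.2.2.1], by simp [Fin.ext_iff, h.2.2.2.1],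
      by simp [Fin.ext_iff, h.2.2.2.2]⟩

end Spikes

section DetNumber

variable {m k : ℕ}

lemma detNumber_kneserGraph_zero : detNumber (kneserGraph m 0) = 0 :=
  Nat.eq_zero_of_le_zero <| (detNumber_le (S := ∅) fun g h _ => RelIso.ext fun v =>
    Subtype.ext (by rw [card_eq_zero.1 (g v).2, card_eq_zero.1 (h v).2])).trans card_empty.le

lemma two_mul_sub_one_le_detNumber_kneserGraph (hk : 1 ≤ k) (hm : 2 * k + 1 ≤ m) :
    2 * (m - 1) ≤ (k + 1) * detNumber (kneserGraph m k) := by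
  obtain ⟨S, hS, hdet⟩ := exists_isDeterminingSet_card_eq_detNumber (kneserGraph m k)
  simpa [hS] using ((isDeterminingSet_kneserGraph_iff hk hm S).1 hdet).two_mul_card_sub_one_le

lemma detNumber_kneserGraph_le (hk : 1 ≤ k) (hm : 2 * k + 1 ≤ m) :
    detNumber (kneserGraph m k) ≤ m - k :=
  (detNumber_le ((isDeterminingSet_kneserGraph_iff hk hm _).2
    (separatesPoints_windows hk (by omega)))).trans (card_image_le.trans (by simp))

lemma detNumber_kneserGraph_lt (hk : 2 ≤ k) (hm : 2 * k + 1 ≤ m) (h2 : k = 2 → 7 ≤ m) :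
    detNumber (kneserGraph m k) < m - k := by
  obtain ⟨s, rfl⟩ : ∃ s, m = s + k + 1 := ⟨m - k - 1, by omega⟩
  obtain ⟨part, hsurj, htwo⟩ :=
    exists_surjective_missing_each_twice (s := s) hk (by omega) (by omega)
  calc detNumber (kneserGraph (s + k + 1) k)
      ≤ #(spikes part) := detNumber_le ((isDeterminingSet_kneserGraph_iff (by omega) hm _).2
        (separatesPoints_spikes hsurj htwo))
    _ ≤ s := card_image_le.trans (by simp)
    _ < s + k + 1 - k := by omega

end DetNumber

theorem stmt_18 (n k : ℕ) (hn : 2 * k + 1 ≤ n + 1) :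
    detNumber (kneserGraph (n + 1) k) = n + 1 - k ↔
      k = 1 ∨ (n + 1 = 5 ∧ k = 2) ∨ (n + 1 = 6 ∧ k = 2) := by
  rcases Nat.eq_zero_or_pos k with rfl | hk
  · simp [detNumber_kneserGraph_zero]
  have hlower := two_mul_sub_one_le_detNumber_kneserGraph hk hn
  have hupper := detNumber_kneserGraph_le hk hn
  constructor
  · intro h
    by_contra hne
    have := detNumber_kneserGraph_lt (k := k) (by omega) hn (by omega)
    omega
  · rintro (rfl | ⟨hm, rfl⟩ | ⟨hm, rfl⟩) <;> omega
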